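/- arXiv:1109.5736 — 6 statements merged into one kernel-verified Lean document; each statement's English description precedes it below -/
import Mathlib

section
/- An upper triangular matrix A = (α_{ij}) in M_n(ℂ) (with α_{ij} = 0 for i > j) is strongly irreducible (i.e., for every invertible X in M_n(ℂ), the commutant of X A X⁻¹ contains no orthogonal projections other than 0 and I) if and only if all diagonal entries are equal (α_{11} = α_{22} = ⋯ = α_{nn}) and all superdiagonal entries are nonzero (α_{i,i+1} ≠ 0 for 1 ≤ i ≤ n−1). -/
/-!
Strong irreducibility only sees the idempotents commuting with `A`: every idempotent `E` is
similar to an orthogonal projection, so `A` is strongly irreducible iff `0` and `1` are the only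
idempotents commuting with `A`, i.e. iff `A` is indecomposable.

For upper triangular `A`, two distinct diagonal entries `α ≠ β` give a nontrivial Fitting
decomposition of `A - α`. So an indecomposable `A` is `α + N` with `N` strictly upper
triangular. A vanishing superdiagonal entry of `N` forces `N ^ (n - 1) = 0`, and a nilpotent
operator of index `m < n` splits off a cyclic subspace of dimension `m` with an invariant
complement. Conversely, if no superdiagonal entry vanishes, `ker N` is a line, and each of two
complementary `N`-invariant subspaces would have to contain it.
-/

open Module LinearMap

/-- For an endomorphism `f` this is indecomposability of the module defined by `f`: commuting
idempotents are the projections onto pairs of complementary `f`-invariant subspaces. -/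
def IsIndecomposable {R : Type*} [Ring R] (a : R) : Prop :=
  ∀ e : R, IsIdempotentElem e → Commute a e → e = 0 ∨ e = 1

section Ring

variable {R S : Type*} [Ring R] [Ring S] {a : R}

theorem IsIndecomposable.map (h : IsIndecomposable a) (φ : R ≃+* S) :
    IsIndecomposable (φ a) := fun e he hae => by
  simpa using h (φ.symm e) (he.map φ.symm) (by simpa using hae.map φ.symm)

theorem isIndecomposable_map_iff (φ : R ≃+* S) :
    IsIndecomposable (φ a) ↔ IsIndecomposable a :=
  ⟨fun h => by simpa using h.map φ.symm, fun h => h.map φ⟩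

theorem isIndecomposable_units_conj_iff (u : Rˣ) :
    IsIndecomposable (u * a * ↑u⁻¹) ↔ IsIndecomposable a :=
  isIndecomposable_map_iff (MulSemiringAction.toRingEquiv (ConjAct Rˣ) R (ConjAct.toConjAct u))

theorem isIndecomposable_sub_algebraMap_iff {K : Type*} [CommRing K] [Algebra K R] (c : K) :
    IsIndecomposable (a - algebraMap K R c) ↔ IsIndecomposable a := by
  have hcomm (e : R) : Commute (a - algebraMap K R c) e ↔ Commute a e :=
    ⟨fun h => by simpa using h.add_left (Algebra.commute_algebraMap_left c e),
      fun h => h.sub_left (Algebra.commute_algebraMap_left c e)⟩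
  simp only [IsIndecomposable, hcomm]

end Ring

theorem not_isIndecomposable_of_isCompl {R M : Type*} [Ring R] [AddCommGroup M] [Module R M]
    {f : Module.End R M} {V W : Submodule R M} (hVW : IsCompl V W) (hV : V ≠ ⊥) (hW : W ≠ ⊥)
    (hfV : V ∈ f.invtSubmodule) (hfW : W ∈ f.invtSubmodule) : ¬IsIndecomposable f := by
  intro h
  have hE := Submodule.isIdempotentElem_projection hVW
  have hfE : Commute f (V.projection W hVW) := by
    refine ((LinearMap.IsIdempotentElem.commute_iff hE).mpr ?_).symm
    rw [Submodule.range_projection, Submodule.ker_projection]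
    exact ⟨hfV, hfW⟩
  rcases h _ hE hfE with h0 | h1
  · exact hV (by simpa [h0] using (Submodule.range_projection hVW).symm)
  · exact hW (by simpa [h1, Module.End.one_eq_id] using (Submodule.ker_projection hVW).symm)

section FiniteDimensional

variable {K M : Type*} [Field K] [AddCommGroup M] [Module K M] [FiniteDimensional K M]
  {f : Module.End K M}

theorem IsIndecomposable.isNilpotent_or_isUnit_of_commute (h : IsIndecomposable f)
    {g : Module.End K M} (hfg : Commute f g) : IsNilpotent g ∨ IsUnit g := by
  obtain ⟨k, hcompl, hk⟩ :=
    (g.eventually_isCompl_ker_pow_range_pow.and (Filter.eventually_ge_atTop 1)).exists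
  have hfgk := hfg.pow_right k
  have hker : ker (g ^ k) ∈ f.invtSubmodule := fun x (hx : (g ^ k) x = 0) => by
    change (g ^ k) (f x) = 0
    rw [← Module.End.mul_apply, ← hfgk.eq, Module.End.mul_apply, hx, map_zero]
  have hrange : range (g ^ k) ∈ f.invtSubmodule := by
    rintro _ ⟨y, rfl⟩
    exact ⟨f y, by rw [← Module.End.mul_apply, ← hfgk.eq, Module.End.mul_apply]⟩
  by_contra! hg
  refine not_isIndecomposable_of_isCompl hcompl ?_ ?_ hker hrange h
  · rw [Ne, ← LinearMap.isUnit_iff_ker_eq_bot, isUnit_pow_iff (by omega)]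
    exact hg.2
  · rw [Ne, LinearMap.range_eq_bot]
    exact fun hgk => hg.1 ⟨k, hgk⟩

theorem Module.End.ker_inf_ne_bot_of_isNilpotent (hf : IsNilpotent f) {V : Submodule K M}
    (hV : V ≠ ⊥) (hfV : V ∈ f.invtSubmodule) : ker f ⊓ V ≠ ⊥ := by
  have : Nontrivial V := Submodule.nontrivial_iff_ne_bot.mpr hV
  have hker : ker (f.restrict hfV) ≠ ⊥ := by
    rw [Ne, ← LinearMap.isUnit_iff_ker_eq_bot]
    exact fun hu => hu.not_isNilpotent (Module.End.isNilpotent.restrict hfV hf)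
  obtain ⟨x, hx, hx0⟩ := (Submodule.ne_bot_iff _).mp hker
  rw [Submodule.ne_bot_iff]
  exact ⟨x, ⟨congrArg Subtype.val (mem_ker.mp hx), x.2⟩, by simpa using hx0⟩

theorem isIndecomposable_of_isNilpotent_of_finrank_ker_le_one (hf : IsNilpotent f)
    (hker : finrank K (ker f) ≤ 1) : IsIndecomposable f := by
  have heq : ∀ S ≤ ker f, S ≠ ⊥ → S = ker f := fun S hS hS0 =>
    Submodule.eq_of_le_of_finrank_eq hS <| by
      have := Submodule.finrank_mono hS
      have := Submodule.one_le_finrank_iff.mpr hS0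
      omega
  intro E hE hfE
  obtain ⟨hrange, hkerE⟩ := (LinearMap.IsIdempotentElem.commute_iff hE).mp hfE.symm
  by_contra! hE01
  have hrange0 : range E ≠ ⊥ := by
    rw [Ne, LinearMap.range_eq_bot]
    exact hE01.1
  have hkerE0 : ker E ≠ ⊥ := by
    rw [Ne, hE.ker_eq_range_one_sub, LinearMap.range_eq_bot, sub_eq_zero]
    exact hE01.2.symm
  have h1 := Module.End.ker_inf_ne_bot_of_isNilpotent hf hrange0 hrange
  have h2 := Module.End.ker_inf_ne_bot_of_isNilpotent hf hkerE0 hkerE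
  have hr : ker f ≤ range E := (heq _ inf_le_left h1).symm.le.trans inf_le_right
  have hk : ker f ≤ ker E := (heq _ inf_le_left h2).symm.le.trans inf_le_right
  exact h1 (eq_bot_iff.mpr (inf_le_left.trans (hE.isCompl.inf_eq_bot ▸ le_inf hr hk)))

omit [FiniteDimensional K M] in
theorem Module.End.eq_zero_of_dual_pow_apply_sum_eq_zero {m : ℕ} (hf : f ^ (m + 1) = 0)
    {v : M} {φ : Dual K M} (hv : φ ((f ^ m) v) ≠ 0) {c : Fin (m + 1) → K}
    (hc : ∀ j : Fin (m + 1), φ ((f ^ (j : ℕ)) (∑ i, c i • (f ^ (i : ℕ)) v)) = 0) : c = 0 := by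
  suffices ∀ i : ℕ, ∀ hi : i < m + 1, c ⟨i, hi⟩ = 0 from funext fun i => this i i.2
  intro i
  induction i using Nat.strong_induction_on with
  | _ i ih =>
  intro hi
  -- applying `f ^ (m - i)` kills the terms after `i`, and those before `i` vanish by induction
  have h := hc ⟨m - i, by omega⟩
  simp only [map_sum, map_smul, ← Module.End.mul_apply, ← pow_add] at h
  rw [Finset.sum_eq_single ⟨i, hi⟩] at h
  · simpa [Nat.sub_add_cancel (by omega : i ≤ m), hv] using h
  · rintro ⟨t, ht⟩ _ hti
    rcases lt_or_gt_of_ne (fun h => hti (Fin.ext h) : t ≠ i) with hlt | hgt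
    · simp [ih t hlt ht]
    · change c _ • φ ((f ^ (m - i + t)) v) = 0
      rw [← Nat.add_sub_cancel' (by omega : m + 1 ≤ m - i + t), pow_add, hf]
      simp
  · simp

omit [FiniteDimensional K M] in
theorem Module.End.span_pow_apply_mem_invtSubmodule {m : ℕ} (hf : f ^ (m + 1) = 0) (v : M) :
    Submodule.span K (Set.range fun i : Fin (m + 1) => (f ^ (i : ℕ)) v) ∈ f.invtSubmodule := by
  rw [Module.End.mem_invtSubmodule_iff_map_le, Submodule.map_span, Submodule.span_le]
  rintro _ ⟨_, ⟨i, rfl⟩, rfl⟩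
  change f ((f ^ (i : ℕ)) v) ∈ _
  rw [← Module.End.mul_apply, ← pow_succ']
  by_cases hi : (i : ℕ) + 1 < m + 1
  · exact Submodule.subset_span ⟨⟨i + 1, hi⟩, rfl⟩
  · rw [show (i : ℕ) + 1 = m + 1 by omega, hf]
    exact zero_mem _

/-- The cyclic subspace spanned by `v, f v, …, f ^ m v` has the common kernel of the
`φ ∘ f ^ j` as an invariant complement. -/
theorem not_isIndecomposable_of_pow_succ_eq_zero {m : ℕ} (hf : f ^ (m + 1) = 0)
    (hm : f ^ m ≠ 0) (hlt : m + 1 < finrank K M) : ¬IsIndecomposable f := by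
  obtain ⟨v, hv⟩ : ∃ v, (f ^ m) v ≠ 0 := by
    by_contra! H
    exact hm (LinearMap.ext H)
  obtain ⟨φ, hφ⟩ := Module.Projective.exists_dual_ne_zero K hv
  have hind := fun c => Module.End.eq_zero_of_dual_pow_apply_sum_eq_zero hf hφ (c := c)
  let b : Fin (m + 1) → M := fun i => (f ^ (i : ℕ)) v
  let Φ : M →ₗ[K] Fin (m + 1) → K := LinearMap.pi fun j => φ ∘ₗ f ^ (j : ℕ)
  have hli : LinearIndependent K b := Fintype.linearIndependent_iff.mpr fun c hc =>
    congrFun (hind c fun j => by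
      rw [show ∑ i, c i • (f ^ (i : ℕ)) v = 0 from hc, map_zero, map_zero])
  have hdisj : Disjoint (Submodule.span K (Set.range b)) (ker Φ) := by
    rw [Submodule.disjoint_def]
    intro x hx hxΦ
    obtain ⟨c, rfl⟩ := (Submodule.mem_span_range_iff_exists_fun K).mp hx
    simp [hind c fun j => congrFun (mem_ker.mp hxΦ) j]
  have hZ : finrank K (Submodule.span K (Set.range b)) = m + 1 := by
    rw [finrank_span_eq_card hli, Fintype.card_fin]
  have hW : finrank K M - (m + 1) ≤ finrank K (ker Φ) := by
    have := Φ.finrank_range_add_finrank_ker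
    have := Submodule.finrank_le (range Φ)
    rw [Module.finrank_fin_fun] at this
    omega
  refine not_isIndecomposable_of_isCompl
    ((Submodule.isCompl_iff_disjoint _ _ (by omega)).mpr hdisj) ?_ ?_ ?_ ?_
  · rw [← Submodule.one_le_finrank_iff]
    omega
  · rw [← Submodule.one_le_finrank_iff]
    omega
  · exact Module.End.span_pow_apply_mem_invtSubmodule hf v
  · intro x (hx : Φ x = 0)
    change Φ (f x) = 0
    funext j
    change φ ((f ^ (j : ℕ)) (f x)) = 0
    rw [← Module.End.mul_apply, ← pow_succ]
    by_cases hj : (j : ℕ) + 1 < m + 1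
    · exact congrFun hx ⟨j + 1, hj⟩
    · rw [show (j : ℕ) + 1 = m + 1 by omega, hf]
      simp

theorem IsIndecomposable.finrank_le_of_pow_eq_zero (h : IsIndecomposable f) {m : ℕ}
    (hf : f ^ m = 0) : finrank K M ≤ m := by
  by_contra! hlt
  have : Nontrivial M := Module.nontrivial_of_finrank_pos (R := K) (by omega)
  obtain ⟨k, hk⟩ := Nat.exists_eq_succ_of_ne_zero (pos_nilpotencyClass_iff.mpr ⟨m, hf⟩).ne'
  have hkm : nilpotencyClass f ≤ m := Nat.sInf_le hf
  obtain ⟨hk1, hk0⟩ := nilpotencyClass_eq_succ_iff.mp hk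
  exact not_isIndecomposable_of_pow_succ_eq_zero hk1 hk0 (by omega) h

end FiniteDimensional

namespace Matrix

section Field

variable {ι K : Type*} [Fintype ι] [DecidableEq ι] [Field K]

theorem isIndecomposable_toLin'_iff {A : Matrix ι ι K} :
    IsIndecomposable (toLin' A) ↔ IsIndecomposable A :=
  isIndecomposable_map_iff (toLinAlgEquiv' : Matrix ι ι K ≃ₐ[K] _).toRingEquiv

theorem isNilpotent_or_isUnit_of_isIndecomposable_of_commute {A B : Matrix ι ι K}
    (h : IsIndecomposable A) (hAB : Commute A B) : IsNilpotent B ∨ IsUnit B := by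
  let φ : Matrix ι ι K ≃ₐ[K] Module.End K (ι → K) := toLinAlgEquiv'
  rw [← IsNilpotent.map_iff φ.injective, ← isUnit_map_iff φ]
  exact (isIndecomposable_toLin'_iff.mpr h).isNilpotent_or_isUnit_of_commute (hAB.map φ)

theorem card_le_of_isIndecomposable_of_pow_eq_zero {N : Matrix ι ι K}
    (h : IsIndecomposable N) {m : ℕ} (hN : N ^ m = 0) : Fintype.card ι ≤ m := by
  simpa using (isIndecomposable_toLin'_iff.mpr h).finrank_le_of_pow_eq_zero
    (m := m) (by rw [← toLin'_pow, hN, map_zero])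

end Field

theorem pow_apply_eq_zero_of_weight {ι R : Type*} [Fintype ι] [DecidableEq ι] [Semiring R]
    {N : Matrix ι ι R} (w : ι → ℕ) (hN : ∀ i j, w j ≤ w i → N i j = 0) (m : ℕ) {i j : ι}
    (hij : w j < w i + m) : (N ^ m) i j = 0 := by
  induction m generalizing j with
  | zero => exact one_apply_ne (by rintro rfl; omega)
  | succ m ih =>
    rw [pow_succ, mul_apply]
    refine Finset.sum_eq_zero fun l _ => ?_
    by_cases hl : w l < w i + m
    · rw [ih hl, zero_mul]
    · rw [hN l j (by omega), mul_zero]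

theorem pow_eq_zero_of_weight {ι R : Type*} [Fintype ι] [DecidableEq ι] [Semiring R]
    {N : Matrix ι ι R} (w : ι → ℕ) (hN : ∀ i j, w j ≤ w i → N i j = 0) {m : ℕ}
    (hw : ∀ i, w i < m) : N ^ m = 0 := by
  ext i j
  exact pow_apply_eq_zero_of_weight w hN m (by have := hw j; omega)

section UpperTriangular

variable {ι K : Type*} [Fintype ι] [DecidableEq ι] [LinearOrder ι] [Field K] {A : Matrix ι ι K}

theorem IsUpperTriangular.not_isUnit_sub_algebraMap_diag (hA : A.IsUpperTriangular) (i : ι) :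
    ¬IsUnit (A - algebraMap K _ (A i i)) := by
  rw [isUnit_iff_isUnit_det, isUnit_iff_ne_zero, not_not, det_of_isUpperTriangular
    (hA.sub (by rw [algebraMap_eq_diagonal]; exact blockTriangular_diagonal _))]
  exact Finset.prod_eq_zero (Finset.mem_univ i) (by simp [algebraMap_matrix_apply])

theorem IsUpperTriangular.diag_eq_of_isIndecomposable (hA : A.IsUpperTriangular)
    (h : IsIndecomposable A) (i j : ι) : A i i = A j j := by
  have hnil : IsNilpotent (A - algebraMap K _ (A i i)) :=
    (isNilpotent_or_isUnit_of_isIndecomposable_of_commute h ((Commute.refl A).sub_right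
      (Algebra.commute_algebraMap_right _ _))).resolve_right (hA.not_isUnit_sub_algebraMap_diag i)
  by_contra hij
  apply hA.not_isUnit_sub_algebraMap_diag j
  rw [show A - algebraMap K _ (A j j) =
      algebraMap K _ (A i i - A j j) + (A - algebraMap K _ (A i i)) by rw [map_sub]; abel]
  exact hnil.isUnit_add_left_of_commute ((sub_ne_zero.mpr hij).isUnit.map _)
    (Algebra.commute_algebraMap_right _ _)

theorem IsUpperTriangular.sub_algebraMap_apply_eq_zero (hA : A.IsUpperTriangular)
    (hdiag : ∀ i j, A i i = A j j) (k : ι) {i j : ι} (hji : j ≤ i) :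
    (A - algebraMap K _ (A k k)) i j = 0 := by
  rcases hji.lt_or_eq with hlt | rfl
  · simp [algebraMap_matrix_apply, hA hlt, hlt.ne']
  · simp [algebraMap_matrix_apply, hdiag j k]

end UpperTriangular

section Fin

variable {n : ℕ} {K : Type*} [Field K]

theorem apply_eq_zero_of_mulVec_eq_zero {N : Matrix (Fin n) (Fin n) K}
    (hN : ∀ i j, j ≤ i → N i j = 0)
    (hsuper : ∀ i : Fin n, ∀ h : (i : ℕ) + 1 < n, N i ⟨i + 1, h⟩ ≠ 0)
    {x : Fin n → K} (hx : N *ᵥ x = 0) (j : Fin n) (hj : 0 < (j : ℕ)) : x j = 0 := by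
  induction hd : n - (j : ℕ) using Nat.strong_induction_on generalizing j with
  | _ d ih =>
  let i : Fin n := ⟨j - 1, by omega⟩
  have hi : (i : ℕ) + 1 = j := by simp only [i]; omega
  have hrow := congrFun hx i
  rw [mulVec, dotProduct, Finset.sum_eq_single j] at hrow
  · refine (mul_eq_zero.mp hrow).resolve_left ?_
    convert hsuper i (by omega)
    exact hi.symm
  · intro t _ htj
    by_cases ht : (t : ℕ) < j
    · rw [hN _ _ (Fin.le_def.mpr (by omega)), zero_mul]
    · rw [ih (n - t) (by omega) t (by omega) rfl, mul_zero]
  · simp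

variable {A : Matrix (Fin n) (Fin n) K}

theorem IsUpperTriangular.superdiag_ne_zero_of_isIndecomposable (hA : A.IsUpperTriangular)
    (h : IsIndecomposable A) (k : Fin n) (hk : (k : ℕ) + 1 < n) : A k ⟨k + 1, hk⟩ ≠ 0 := by
  intro hzero
  set N := A - algebraMap K _ (A k k)
  have hN : ∀ i j, j ≤ i → N i j = 0 := fun _ _ =>
    hA.sub_algebraMap_apply_eq_zero (hA.diag_eq_of_isIndecomposable h) k
  -- closing the gap between `k` and `k + 1`, every nonzero entry of `N` still raises the
  -- weight, which now takes only `n - 1` values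
  have hNpow : N ^ (n - 1) = 0 := by
    refine pow_eq_zero_of_weight (fun j : Fin n => if (j : ℕ) ≤ k then (j : ℕ) else j - 1)
      (fun i j hij => ?_) (fun i => by split_ifs <;> omega)
    by_cases hji : (j : ℕ) ≤ i
    · exact hN i j (Fin.le_def.mpr hji)
    have hik : i = k := by ext; split_ifs at hij <;> omega
    have hjk : j = ⟨k + 1, hk⟩ := Fin.ext (by split_ifs at hij <;> omega : (j : ℕ) = k + 1)
    have hne : k ≠ ⟨k + 1, hk⟩ := by simp [Fin.ext_iff]
    simp [N, hik, hjk, algebraMap_matrix_apply, hzero, hne]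
  have := card_le_of_isIndecomposable_of_pow_eq_zero
    ((isIndecomposable_sub_algebraMap_iff _).mpr h) hNpow
  rw [Fintype.card_fin] at this
  omega

theorem IsUpperTriangular.isIndecomposable (hA : A.IsUpperTriangular)
    (hdiag : ∀ i j, A i i = A j j)
    (hsuper : ∀ i : Fin n, ∀ h : (i : ℕ) + 1 < n, A i ⟨i + 1, h⟩ ≠ 0) : IsIndecomposable A := by
  rcases n.eq_zero_or_pos with rfl | hn
  · exact fun E _ _ => Or.inl (Subsingleton.elim _ _)
  set a₀ : Fin n := ⟨0, hn⟩
  set N := A - algebraMap K _ (A a₀ a₀)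
  have hN : ∀ i j, j ≤ i → N i j = 0 := fun _ _ => hA.sub_algebraMap_apply_eq_zero hdiag a₀
  have hNsuper : ∀ i : Fin n, ∀ h : (i : ℕ) + 1 < n, N i ⟨i + 1, h⟩ ≠ 0 := fun i h => by
    have hne : i ≠ ⟨i + 1, h⟩ := by simp [Fin.ext_iff]
    simpa [N, algebraMap_matrix_apply, hne] using hsuper i h
  rw [← isIndecomposable_sub_algebraMap_iff (A a₀ a₀), ← isIndecomposable_toLin'_iff]
  refine isIndecomposable_of_isNilpotent_of_finrank_ker_le_one
    ⟨n, by rw [← toLin'_pow, pow_eq_zero_of_weight Fin.val hN Fin.isLt, map_zero]⟩ ?_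
  have hker : ker (toLin' N) ≤ Submodule.span K {Pi.single a₀ 1} := fun x hx => by
    refine Submodule.mem_span_singleton.mpr ⟨x a₀, funext fun j => ?_⟩
    rcases eq_or_ne j a₀ with rfl | hj
    · simp
    · rw [apply_eq_zero_of_mulVec_eq_zero hN hNsuper hx j
        (Nat.pos_of_ne_zero fun h => hj (Fin.ext h))]
      simp [hj]
  exact (Submodule.finrank_mono hker).trans ((finrank_span_le_card _).trans (by simp))

theorem IsUpperTriangular.isIndecomposable_iff (hA : A.IsUpperTriangular) :
    IsIndecomposable A ↔ (∀ i j, A i i = A j j) ∧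
      ∀ i : Fin n, ∀ h : (i : ℕ) + 1 < n, A i ⟨i + 1, h⟩ ≠ 0 :=
  ⟨fun h => ⟨hA.diag_eq_of_isIndecomposable h, hA.superdiag_ne_zero_of_isIndecomposable h⟩,
    fun ⟨hdiag, hsuper⟩ => hA.isIndecomposable hdiag hsuper⟩

end Fin

section RCLike

variable {ι 𝕜 : Type*} [Fintype ι] [DecidableEq ι] [RCLike 𝕜]

open scoped MatrixOrder ComplexOrder

/-- `G = Eᴴ E + Fᴴ F` with `F = 1 - E` is positive definite and satisfies `G E = Eᴴ G`, so `E` is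
self-adjoint for the inner product given by `G`; writing `G = Sᴴ S`, conjugation by `S` makes `E`
Hermitian. -/
theorem exists_isUnit_conj_isHermitian_of_isIdempotentElem {E : Matrix ι ι 𝕜}
    (hE : IsIdempotentElem E) : ∃ S : Matrix ι ι 𝕜, IsUnit S ∧ (S * E * S⁻¹).IsHermitian := by
  set F := 1 - E
  have hF : IsIdempotentElem F := hE.one_sub
  have hFE : F * E = 0 := by simp [F, sub_mul, hE.eq]
  have hEF : E * F = 0 := by simp [F, mul_sub, hE.eq]
  set G := Eᴴ * E + Fᴴ * F
  have hGE : G * E = Eᴴ * E := by simp [G, add_mul, Matrix.mul_assoc, hE.eq, hFE]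
  have hEG : Eᴴ * G = Eᴴ * E := by
    simp [G, mul_add, ← Matrix.mul_assoc, ← conjTranspose_mul, hE.eq, hFE]
  have hFG : Fᴴ * G = Fᴴ * F := by
    simp [G, mul_add, ← Matrix.mul_assoc, ← conjTranspose_mul, hF.eq, hEF]
  obtain ⟨S, hS⟩ : ∃ S, G = Sᴴ * S := CStarAlgebra.nonneg_iff_eq_star_mul_self.mp
    ((posSemidef_conjTranspose_mul_self E).add (posSemidef_conjTranspose_mul_self F)).nonneg
  have hker : ∀ x, S *ᵥ x = 0 → x = 0 := by
    intro x hx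
    have hGx : G *ᵥ x = 0 := by rw [hS, ← mulVec_mulVec, hx, mulVec_zero]
    have hEx : E *ᵥ x = 0 := by
      rw [← mulVecLin_apply, ← LinearMap.mem_ker, ← ker_mulVecLin_conjTranspose_mul_self,
        LinearMap.mem_ker, mulVecLin_apply, ← hEG, ← mulVec_mulVec, hGx, mulVec_zero]
    have hFx : F *ᵥ x = 0 := by
      rw [← mulVecLin_apply, ← LinearMap.mem_ker, ← ker_mulVecLin_conjTranspose_mul_self,
        LinearMap.mem_ker, mulVecLin_apply, ← hFG, ← mulVec_mulVec, hGx, mulVec_zero]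
    simpa [F, sub_mulVec, hEx] using hFx
  have hSu : IsUnit S := mulVec_injective_iff_isUnit.mp fun x y hxy =>
    sub_eq_zero.mp (hker _ (by rw [mulVec_sub, hxy, sub_self]))
  have hSdet := (isUnit_iff_isUnit_det S).mp hSu
  refine ⟨S, hSu, (star_eq_conjTranspose S ▸ hSu.star).mul_left_cancel ?_⟩
  calc Sᴴ * (S * E * S⁻¹)ᴴ = (S⁻¹ * S)ᴴ * Eᴴ * Sᴴ := by
        simp only [conjTranspose_mul, Matrix.mul_assoc]
    _ = Eᴴ * G * S⁻¹ := by
        rw [nonsing_inv_mul S hSdet, conjTranspose_one, Matrix.one_mul, hS, ← Matrix.mul_assoc,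
          Matrix.mul_assoc _ S, mul_nonsing_inv S hSdet, Matrix.mul_one]
    _ = Sᴴ * (S * E * S⁻¹) := by
        rw [hEG, ← hGE, hS]
        simp only [Matrix.mul_assoc]

def IsStronglyIrreducible (A : Matrix ι ι 𝕜) : Prop :=
  ∀ X : Matrix ι ι 𝕜, IsUnit X → ∀ P : Matrix ι ι 𝕜, P * P = P → P.conjTranspose = P →
    (X * A * X⁻¹) * P = P * (X * A * X⁻¹) → P = 0 ∨ P = 1

theorem isStronglyIrreducible_iff_isIndecomposable {A : Matrix ι ι 𝕜} :
    IsStronglyIrreducible A ↔ IsIndecomposable A := by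
  constructor
  · intro h E hE hAE
    obtain ⟨S, hS, hSE⟩ := exists_isUnit_conj_isHermitian_of_isIdempotentElem hE
    let φ := MulSemiringAction.toRingEquiv _ (Matrix ι ι 𝕜) (ConjAct.toConjAct hS.unit)
    have hφ (M : Matrix ι ι 𝕜) : φ M = S * M * S⁻¹ := by
      simp [φ, ConjAct.units_smul_def, coe_units_inv]
    have := h S hS (φ E) (hE.map φ) (by rw [hφ]; exact hSE)
      (by simpa only [hφ] using (hAE.map φ).eq)
    simpa using this
  · intro h X hX P hP hPh hXAP
    have hconj := (isIndecomposable_units_conj_iff hX.unit).mpr h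
    rw [IsUnit.unit_spec, coe_units_inv, IsUnit.unit_spec] at hconj
    exact hconj P hP hXAP

end RCLike

end Matrix

theorem stmt_0_general (n : ℕ) (A : Matrix (Fin n) (Fin n) ℂ)
    (hupper : ∀ i j : Fin n, (j : ℕ) < (i : ℕ) → A i j = 0) :
    (∀ X : Matrix (Fin n) (Fin n) ℂ, IsUnit X →
      ∀ P : Matrix (Fin n) (Fin n) ℂ, P * P = P → P.conjTranspose = P →
        (X * A * X⁻¹) * P = P * (X * A * X⁻¹) → P = 0 ∨ P = 1) ↔
    ((∀ i j : Fin n, A i i = A j j) ∧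
      ∀ i : Fin n, ∀ h : (i : ℕ) + 1 < n, A i ⟨(i : ℕ) + 1, h⟩ ≠ 0) :=
  Matrix.isStronglyIrreducible_iff_isIndecomposable.trans
    (Matrix.IsUpperTriangular.isIndecomposable_iff fun i j hij => hupper i j hij)

/-- The `n×n` Jordan block with eigenvalue `α` (not needed here, but kept for context). -/
theorem stmt_0 (n : ℕ) (hn : 0 < n) (A : Matrix (Fin n) (Fin n) ℂ)
    (hupper : ∀ i j : Fin n, (j : ℕ) < (i : ℕ) → A i j = 0) :
    (∀ X : Matrix (Fin n) (Fin n) ℂ, IsUnit X →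
      ∀ P : Matrix (Fin n) (Fin n) ℂ, P * P = P → P.conjTranspose = P →
        (X * A * X⁻¹) * P = P * (X * A * X⁻¹) → P = 0 ∨ P = 1) ↔
    ((∀ i j : Fin n, A i i = A j j) ∧
      ∀ i : Fin n, ∀ h : (i : ℕ) + 1 < n, A i ⟨(i : ℕ) + 1, h⟩ ≠ 0) :=
  stmt_0_general n A hupper
end

section
/- Let A = (α_{ij}) be an upper triangular matrix in M_n(ℂ) with all diagonal entries equal to a common value α and all superdiagonal entries α_{i,i+1} nonzero. Then every matrix X ∈ M_n(ℂ) commuting with A is upper triangular with all diagonal entries of X equal to each other. -/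
/-!
Subtracting the scalar `α` leaves a strictly upper triangular `N` with nonzero superdiagonal
that still commutes with `X`. Comparing the `(i, j + 1)` entries of `X * N` and `N * X` gives
`X i j * N j (j + 1) = N i (i + 1) * X (i + 1) (j + 1)` as soon as the entries of `X` left of
`(i, j)` in row `i` and below `(i + 1, j + 1)` in column `j + 1` vanish. Sweeping the rows from
the bottom up and each row from the left, this kills every entry below the diagonal; for `i = j`
it then says that consecutive diagonal entries agree.
-/

namespace Matrix

variable {R : Type*} {n : ℕ} {N X : Matrix (Fin n) (Fin n) R}

section Semiring

variable [Semiring R]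

theorem mul_apply_succ_of_strictUpper (hN : ∀ i j, j ≤ i → N i j = 0) {i j j' : Fin n}
    (hj' : (j' : ℕ) = j + 1) (hrow : ∀ k < j, X i k = 0) :
    (X * N) i j' = X i j * N j j' := by
  rw [mul_apply]
  refine Fintype.sum_eq_single j fun k hk => ?_
  rcases lt_or_gt_of_ne hk with hkj | hjk
  · rw [hrow k hkj, zero_mul]
  · rw [hN k j' (by rw [Fin.le_def]; omega), mul_zero]

theorem strictUpper_mul_apply_eq_zero (hN : ∀ i j, j ≤ i → N i j = 0) {i j : Fin n}
    (hcol : ∀ k, i < k → X k j = 0) : (N * X) i j = 0 := by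
  rw [mul_apply]
  refine Finset.sum_eq_zero fun k _ => ?_
  rcases le_or_gt k i with hki | hik
  · rw [hN i k hki, zero_mul]
  · rw [hcol k hik, mul_zero]

theorem strictUpper_mul_apply_succ (hN : ∀ i j, j ≤ i → N i j = 0) {i i' j : Fin n}
    (hi' : (i' : ℕ) = i + 1) (hcol : ∀ k, i' < k → X k j = 0) :
    (N * X) i j = N i i' * X i' j := by
  rw [mul_apply]
  refine Fintype.sum_eq_single i' fun k hk => ?_
  rcases lt_or_gt_of_ne hk with hki | hik
  · rw [hN i k (by rw [Fin.lt_def] at hki; rw [Fin.le_def]; omega), zero_mul]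
  · rw [hcol k hik, mul_zero]

variable [NoZeroDivisors R]

theorem eq_zero_of_commute_strictUpper (hN : ∀ i j, j ≤ i → N i j = 0)
    (hsuper : ∀ i j : Fin n, (j : ℕ) = i + 1 → N i j ≠ 0) (hXN : Commute X N)
    (i j : Fin n) (hji : j < i) : X i j = 0 := by
  let j' : Fin n := ⟨j + 1, by omega⟩
  have hrow : ∀ k < j, X i k = 0 := fun k hk =>
    eq_zero_of_commute_strictUpper hN hsuper hXN i k (hk.trans hji)
  have hcol : ∀ k, i < k → X k j' = 0 := fun k hk =>
    eq_zero_of_commute_strictUpper hN hsuper hXN k j' <| by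
      simp only [Fin.lt_def, j'] at hk hji ⊢; omega
  have hprod : X i j * N j j' = 0 := by
    rw [← mul_apply_succ_of_strictUpper hN rfl hrow, hXN.eq, strictUpper_mul_apply_eq_zero hN hcol]
  exact (mul_eq_zero.mp hprod).resolve_right (hsuper j j' rfl)
termination_by (n - i, (j : ℕ))
decreasing_by
  · exact Prod.Lex.right _ hk
  · exact Prod.Lex.left _ _ (by omega)

end Semiring

variable [CommRing R] [NoZeroDivisors R]

theorem apply_self_eq_apply_succ_of_commute (hN : ∀ i j, j ≤ i → N i j = 0)
    (hsuper : ∀ i j : Fin n, (j : ℕ) = i + 1 → N i j ≠ 0) (hXN : Commute X N)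
    (hX : X.BlockTriangular id) {i i' : Fin n} (hi' : (i' : ℕ) = i + 1) : X i i = X i' i' := by
  have hrow : ∀ k < i, X i k = 0 := fun k hk => hX hk
  have hcol : ∀ k, i' < k → X k i' = 0 := fun k hk => hX hk
  have h := mul_apply_succ_of_strictUpper hN hi' hrow
  rw [hXN.eq, strictUpper_mul_apply_succ hN hi' hcol, mul_comm (N i i')] at h
  exact (mul_right_cancel₀ (hsuper i i' hi') h).symm

end Matrix

theorem Fin.apply_eq_apply_of_apply_eq_apply_succ {α : Sort*} {n : ℕ} {f : Fin n → α}
    (h : ∀ i j : Fin n, (j : ℕ) = i + 1 → f i = f j) (i j : Fin n) : f i = f j := by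
  cases n with
  | zero => exact i.elim0
  | succ m =>
    have h0 : ∀ k : Fin (m + 1), f k = f 0 :=
      Fin.induction rfl fun k ih => (h _ _ (by simp)).symm.trans ih
    rw [h0 i, h0 j]

open Matrix in
theorem stmt_1 (n : ℕ) (α : ℂ) (A X : Matrix (Fin n) (Fin n) ℂ)
    (hupper : ∀ i j : Fin n, (j : ℕ) < (i : ℕ) → A i j = 0)
    (hdiag : ∀ i : Fin n, A i i = α)
    (hsuper : ∀ i : Fin n, ∀ h : (i : ℕ) + 1 < n, A i ⟨(i : ℕ) + 1, h⟩ ≠ 0)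
    (hcomm : X * A = A * X) :
    (∀ i j : Fin n, (j : ℕ) < (i : ℕ) → X i j = 0) ∧
      (∀ i j : Fin n, X i i = X j j) := by
  set N := A - scalar (Fin n) α
  have hN : ∀ i j, j ≤ i → N i j = 0 := by
    intro i j hji
    rcases hji.lt_or_eq with hji | rfl
    · simp [N, hupper i j hji, hji.ne']
    · simp [N, hdiag]
  have hNsuper : ∀ i j : Fin n, (j : ℕ) = i + 1 → N i j ≠ 0 := by
    intro i j hj
    rw [show j = ⟨i + 1, by omega⟩ from Fin.ext hj]
    simpa [N, Fin.ext_iff] using hsuper i (by omega)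
  have hXN : Commute X N := Commute.sub_right hcomm (scalar_commute α (Commute.all α) X).symm
  have hX : X.BlockTriangular id := eq_zero_of_commute_strictUpper hN hNsuper hXN
  exact ⟨hX, Fin.apply_eq_apply_of_apply_eq_apply_succ fun i j =>
    apply_self_eq_apply_succ_of_commute hN hNsuper hXN hX⟩
end

section
/- Let A ∈ M_n(ℂ) be upper triangular with all diagonal entries equal and all superdiagonal entries nonzero. Then the only idempotents in the commutant of A are 0 and the identity I. -/
open Matrix Finset

lemma aux_ker (n : ℕ) (B : Matrix (Fin n) (Fin n) ℂ)
    (hB0 : ∀ i j : Fin n, (j : ℕ) ≤ (i : ℕ) → B i j = 0)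
    (hBs : ∀ i : Fin n, ∀ h : (i : ℕ) + 1 < n, B i ⟨(i : ℕ) + 1, h⟩ ≠ 0)
    (x : Fin n → ℂ) (hx : B *ᵥ x = 0) :
    ∀ j : Fin n, 0 < (j : ℕ) → x j = 0 := by
  have key : ∀ k : ℕ, ∀ j : Fin n, n ≤ (j : ℕ) + k → 0 < (j : ℕ) → x j = 0 := by
    intro k
    induction k with
    | zero =>
      intro j hj _
      exact absurd hj (by have := j.isLt; omega)
    | succ k ih =>
      intro j hj hj0
      obtain ⟨m, hm⟩ : ∃ m, (j : ℕ) = m + 1 := ⟨(j : ℕ) - 1, by omega⟩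
      have hmn : m + 1 < n := by have := j.isLt; omega
      have hmn' : m < n := by omega
      have hrow : (B *ᵥ x) ⟨m, hmn'⟩ = 0 := by rw [hx]; rfl
      rw [Matrix.mulVec, dotProduct] at hrow
      have hsum : ∑ l : Fin n, B ⟨m, hmn'⟩ l * x l = B ⟨m, hmn'⟩ j * x j := by
        apply Finset.sum_eq_single j
        · intro l _ hl
          rcases le_or_gt (l : ℕ) m with h | h
          · rw [hB0 _ _ h, zero_mul]
          · have hlj : (j : ℕ) < (l : ℕ) := by
              rcases lt_or_eq_of_le (Nat.succ_le_of_lt h) with h' | h'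
              · omega
              · exact absurd (Fin.ext (by omega : (l : ℕ) = (j : ℕ))) hl
            rw [ih l (by omega) (by omega), mul_zero]
        · intro h; exact absurd (Finset.mem_univ j) h
      rw [hsum] at hrow
      have hj' : j = ⟨m + 1, hmn⟩ := Fin.ext hm
      have hBne : B ⟨m, hmn'⟩ j ≠ 0 := by rw [hj']; exact hBs ⟨m, hmn'⟩ hmn
      exact (mul_eq_zero.mp hrow).resolve_left hBne
  intro j hj0
  exact key n j (by omega) hj0

lemma aux_idem (n : ℕ) (hn : 0 < n) (B Q : Matrix (Fin n) (Fin n) ℂ)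
    (hB0 : ∀ i j : Fin n, (j : ℕ) ≤ (i : ℕ) → B i j = 0)
    (hBs : ∀ i : Fin n, ∀ h : (i : ℕ) + 1 < n, B i ⟨(i : ℕ) + 1, h⟩ ≠ 0)
    (hcomm : B * Q = Q * B) (hQ : Q * Q = Q)
    (hcol : ∀ i : Fin n, Q i ⟨0, hn⟩ = 0) : Q = 0 := by
  have C : ∀ k : ℕ, ∀ y : Fin n → ℂ, Q *ᵥ y = y →
      (∀ j : Fin n, k ≤ (j : ℕ) → y j = 0) → y = 0 := by
    intro k
    induction k with
    | zero => intro y _ hy; funext j; exact hy j (Nat.zero_le _)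
    | succ k ih =>
      intro y hQy hy
      have hQBy : Q *ᵥ (B *ᵥ y) = B *ᵥ y := by
        rw [Matrix.mulVec_mulVec, ← hcomm, ← Matrix.mulVec_mulVec, hQy]
      have hBy0 : B *ᵥ y = 0 := by
        apply ih _ hQBy
        intro j hj
        rw [Matrix.mulVec, dotProduct]
        apply Finset.sum_eq_zero
        intro l _
        rcases le_or_gt (l : ℕ) (j : ℕ) with h | h
        · rw [hB0 _ _ h, zero_mul]
        · rw [hy l (by omega), mul_zero]
      rcases Nat.eq_zero_or_pos k with hk0 | hkpos
      · subst hk0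
        funext j
        have hj := congrFun hQy j
        rw [Matrix.mulVec, dotProduct] at hj
        rw [← hj]
        apply Finset.sum_eq_zero
        intro l _
        rcases Nat.eq_zero_or_pos (l : ℕ) with h | h
        · have hl0 : l = ⟨0, hn⟩ := Fin.ext h
          rw [hl0, hcol, zero_mul]
        · rw [hy l (by omega), mul_zero]
      · apply ih _ hQy
        intro j hj
        rcases Nat.lt_or_ge (j : ℕ) (k + 1) with hjk | hjk
        · -- (j : ℕ) = k
          have hjeq : (j : ℕ) = k := by omega
          obtain ⟨m, hm⟩ : ∃ m, k = m + 1 := ⟨k - 1, by omega⟩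
          have hmn : m + 1 < n := by have := j.isLt; omega
          have hmn' : m < n := by omega
          have hrow : (B *ᵥ y) ⟨m, hmn'⟩ = 0 := by rw [hBy0]; rfl
          rw [Matrix.mulVec, dotProduct] at hrow
          have hsum : ∑ l : Fin n, B ⟨m, hmn'⟩ l * y l = B ⟨m, hmn'⟩ j * y j := by
            apply Finset.sum_eq_single j
            · intro l _ hl
              rcases le_or_gt (l : ℕ) m with h | h
              · rw [hB0 _ _ h, zero_mul]
              · have hlj : k + 1 ≤ (l : ℕ) := by
                  rcases lt_or_eq_of_le (Nat.succ_le_of_lt h) with h' | h'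
                  · omega
                  · exact absurd (Fin.ext (by omega : (l : ℕ) = (j : ℕ))) hl
                rw [hy l hlj, mul_zero]
            · intro h; exact absurd (Finset.mem_univ j) h
          rw [hsum] at hrow
          have hj' : j = ⟨m + 1, hmn⟩ := Fin.ext (show (j : ℕ) = m + 1 by omega)
          have hBne : B ⟨m, hmn'⟩ j ≠ 0 := by rw [hj']; exact hBs ⟨m, hmn'⟩ hmn
          exact (mul_eq_zero.mp hrow).resolve_left hBne
        · exact hy j hjk
  ext i j
  have hcolfix : Q *ᵥ (fun i => Q i j) = fun i => Q i j := by
    funext i'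
    rw [Matrix.mulVec, dotProduct]
    exact congrFun (congrFun hQ i') j
  have := C n (fun i => Q i j) hcolfix (fun j' hj' => absurd hj' (by have := j'.isLt; omega))
  simpa using congrFun this i

theorem stmt_2 (n : ℕ) (hn : 0 < n) (A : Matrix (Fin n) (Fin n) ℂ)
    (hupper : ∀ i j : Fin n, (j : ℕ) < (i : ℕ) → A i j = 0)
    (hdiag : ∀ i j : Fin n, A i i = A j j)
    (hsuper : ∀ i : Fin n, ∀ h : (i : ℕ) + 1 < n, A i ⟨(i : ℕ) + 1, h⟩ ≠ 0)
    (P : Matrix (Fin n) (Fin n) ℂ) (hP : P * P = P) (hPA : A * P = P * A) :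
    P = 0 ∨ P = 1 := by
  set z : Fin n := ⟨0, hn⟩ with hz
  set c : ℂ := A z z with hc
  set B : Matrix (Fin n) (Fin n) ℂ := A - c • (1 : Matrix (Fin n) (Fin n) ℂ) with hBdef
  have hB0 : ∀ i j : Fin n, (j : ℕ) ≤ (i : ℕ) → B i j = 0 := by
    intro i j hij
    rcases lt_or_eq_of_le hij with h | h
    · have hne : i ≠ j := Fin.ne_of_val_ne (by omega)
      simp [hBdef, Matrix.sub_apply, Matrix.smul_apply, Matrix.one_apply_ne hne,
        hupper i j h]
    · have : j = i := Fin.ext h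
      subst this
      simp [hBdef, Matrix.sub_apply, Matrix.smul_apply, Matrix.one_apply, hc,
        hdiag j z]
  have hBs : ∀ i : Fin n, ∀ h : (i : ℕ) + 1 < n, B i ⟨(i : ℕ) + 1, h⟩ ≠ 0 := by
    intro i h
    have hne : i ≠ ⟨(i : ℕ) + 1, h⟩ := Fin.ne_of_val_ne (show (i:ℕ) ≠ (i:ℕ)+1 by omega)
    simpa [hBdef, Matrix.sub_apply, Matrix.smul_apply, Matrix.one_apply, hne]
      using hsuper i h
  have hcomm : B * P = P * B := by
    simp only [hBdef, Matrix.sub_mul, Matrix.mul_sub, Matrix.smul_mul, Matrix.mul_smul,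
      Matrix.one_mul, Matrix.mul_one, hPA]
  have hx : B *ᵥ (fun i => P i z) = 0 := by
    funext i
    have h1 : (B * P) i z = (P * B) i z := congrFun (congrFun hcomm i) z
    have h2 : (P * B) i z = 0 := by
      rw [Matrix.mul_apply]
      apply Finset.sum_eq_zero
      intro l _
      rw [hB0 l z (by simp [hz]), mul_zero]
    rw [Matrix.mulVec, dotProduct]
    rw [Matrix.mul_apply] at h1
    simp only [h1, h2, Pi.zero_apply]
  have hker := aux_ker n B hB0 hBs (fun i => P i z) hx
  have hlam : P z z * P z z = P z z := by
    have h1 : (P * P) z z = P z z := congrFun (congrFun hP z) z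
    rw [Matrix.mul_apply] at h1
    have h2 : ∑ l : Fin n, P z l * P l z = P z z * P z z := by
      apply Finset.sum_eq_single z
      · intro l _ hl
        have hlpos : 0 < (l : ℕ) := by
          rcases Nat.eq_zero_or_pos (l : ℕ) with h | h
          · exact absurd (Fin.ext (by simpa [hz] using h)) hl
          · exact h
        rw [show P l z = 0 from hker l hlpos, mul_zero]
      · intro h; exact absurd (Finset.mem_univ z) h
    rw [h2] at h1
    exact h1
  have hlam01 : P z z = 0 ∨ P z z = 1 := by
    have h : P z z * (P z z - 1) = 0 := by ring_nf; linear_combination hlam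
    rcases mul_eq_zero.mp h with h | h
    · exact Or.inl h
    · exact Or.inr (by linear_combination h)
  rcases hlam01 with h0 | h1
  · left
    apply aux_idem n hn B P hB0 hBs hcomm hP
    intro i
    rcases Nat.eq_zero_or_pos (i : ℕ) with h | h
    · have : i = z := Fin.ext (by simpa [hz] using h)
      rw [this]; exact h0
    · exact hker i h
  · right
    have hQ : (1 - P) * (1 - P) = 1 - P := by
      have h2 : (1 - P) * (1 - P) = 1 - P - P + P * P := by noncomm_ring
      rw [h2, hP]; abel
    have hcommQ : B * (1 - P) = (1 - P) * B := by
      simp only [Matrix.mul_sub, Matrix.sub_mul, Matrix.one_mul, Matrix.mul_one, hcomm]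
    have hcolQ : ∀ i : Fin n, (1 - P) i z = 0 := by
      intro i
      rcases Nat.eq_zero_or_pos (i : ℕ) with h | h
      · have : i = z := Fin.ext (by simpa [hz] using h)
        rw [this]
        simp [Matrix.sub_apply, Matrix.one_apply, h1]
      · have hiz : i ≠ z := Fin.ne_of_val_ne (by simp [hz]; omega)
        simp [Matrix.sub_apply, Matrix.one_apply, hiz, hker i h]
    have := aux_idem n hn B (1 - P) hB0 hBs hcommQ hQ hcolQ
    exact (sub_eq_zero.mp this).symm
end

section
/- For any upper triangular matrix A ∈ M_n(ℂ) with constant diagonal α, and for any ε > 0, there exists an upper triangular matrix B ∈ M_n(ℂ) with constant diagonal α, the same entries as A on every diagonal except the superdiagonal, all superdiagonal entries nonzero, and ‖A − B‖ < ε (in operator norm). In particular, strongly irreducible upper triangular matrices with constant diagonal are dense among upper triangular matrices with constant diagonal. -/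
/-!
Let `B` be `A` with each vanishing superdiagonal entry replaced by `ε / 2`. Then `A - B` vanishes
off the graph of the cyclic shift `finRotate n`, so it factors as a diagonal matrix with entries
of modulus at most `ε / 2` times a permutation matrix, and its operator norm is at most `ε / 2`.
-/

open scoped Matrix.Norms.L2Operator

theorem finRotate_eq_of_val_add_one_eq {n : ℕ} {i j : Fin n} (h : (i : ℕ) + 1 = j) :
    finRotate n i = j := by
  obtain _ | m := n
  · exact i.elim0
  · ext
    rw [coe_finRotate_of_ne_last (fun hi => by have := j.isLt; simp [hi] at h; omega), h]

namespace Matrix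

section permMatrix

variable {n : Type*} [Fintype n] [DecidableEq n]

theorem eq_diagonal_mul_permMatrix_of_eq_zero_off_perm {R : Type*} [NonAssocSemiring R]
    (σ : Equiv.Perm n) (D : Matrix n n R) (hD : ∀ i j, j ≠ σ i → D i j = 0) :
    D = diagonal (fun i => D i (σ i)) * σ.permMatrix R := by
  ext i j
  by_cases hj : j = σ i
  · subst hj; simp [diagonal_mul, Equiv.Perm.permMatrix]
  · simp [diagonal_mul, Equiv.Perm.permMatrix, PEquiv.toMatrix_apply, Ne.symm hj, hD i j hj]

theorem l2_opNorm_le_of_eq_zero_off_perm {𝕜 : Type*} [RCLike 𝕜] (σ : Equiv.Perm n)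
    (D : Matrix n n 𝕜) (hD : ∀ i j, j ≠ σ i → D i j = 0) : ‖D‖ ≤ ‖fun i => D i (σ i)‖ :=
  calc ‖D‖ = ‖diagonal (fun i => D i (σ i)) * σ.permMatrix 𝕜‖ := by
        rw [← eq_diagonal_mul_permMatrix_of_eq_zero_off_perm σ D hD]
    _ ≤ ‖fun i => D i (σ i)‖ * ‖σ.permMatrix 𝕜‖ := by
        rw [← l2_opNorm_diagonal]; exact l2_opNorm_mul _ _
    _ ≤ ‖fun i => D i (σ i)‖ :=
        mul_le_of_le_one_right (norm_nonneg _) (permMatrix_l2_opNorm_le σ)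

end permMatrix

variable {𝕜 : Type*} {n : ℕ}

def fillSuperdiag [Zero 𝕜] [DecidableEq 𝕜] (A : Matrix (Fin n) (Fin n) 𝕜) (c : 𝕜) :
    Matrix (Fin n) (Fin n) 𝕜 :=
  of fun i j => if (i : ℕ) + 1 = j ∧ A i j = 0 then c else A i j

section fillSuperdiag

variable [Zero 𝕜] [DecidableEq 𝕜] (A : Matrix (Fin n) (Fin n) 𝕜) (c : 𝕜)

theorem fillSuperdiag_apply_of_ne {i j : Fin n} (h : (i : ℕ) + 1 ≠ j) :
    fillSuperdiag A c i j = A i j := by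
  simp [fillSuperdiag, h]

theorem fillSuperdiag_superdiag_ne_zero (hc : c ≠ 0) (i : Fin n) (h : (i : ℕ) + 1 < n) :
    fillSuperdiag A c i ⟨(i : ℕ) + 1, h⟩ ≠ 0 := by
  by_cases hA : A i ⟨(i : ℕ) + 1, h⟩ = 0 <;> simp [fillSuperdiag, hA, hc]

end fillSuperdiag

theorem l2_opNorm_sub_fillSuperdiag_le [RCLike 𝕜] (A : Matrix (Fin n) (Fin n) 𝕜) (c : 𝕜) :
    ‖A - fillSuperdiag A c‖ ≤ ‖c‖ := by
  refine (l2_opNorm_le_of_eq_zero_off_perm (finRotate n) _ fun i j hj => ?_).trans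
    ((pi_norm_le_iff_of_nonneg (norm_nonneg c)).2 fun i => ?_)
  · have hsucc : (i : ℕ) + 1 ≠ j := fun h => hj (finRotate_eq_of_val_add_one_eq h).symm
    rw [sub_apply, fillSuperdiag_apply_of_ne A c hsucc, sub_self]
  · rw [sub_apply, fillSuperdiag, of_apply]
    split_ifs with h
    · rw [h.2, zero_sub, norm_neg]
    · rw [sub_self, norm_zero]
      exact norm_nonneg c

end Matrix

theorem stmt_5 (n : ℕ) (α : ℂ) (A : Matrix (Fin n) (Fin n) ℂ)
    (hupper : ∀ i j : Fin n, (j : ℕ) < (i : ℕ) → A i j = 0)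
    (hdiag : ∀ i : Fin n, A i i = α)
    (ε : ℝ) (hε : 0 < ε) :
    ∃ B : Matrix (Fin n) (Fin n) ℂ,
      (∀ i j : Fin n, (j : ℕ) < (i : ℕ) → B i j = 0) ∧
      (∀ i : Fin n, B i i = α) ∧
      (∀ i j : Fin n, (i : ℕ) + 1 ≠ (j : ℕ) → B i j = A i j) ∧
      (∀ i : Fin n, ∀ h : (i : ℕ) + 1 < n, B i ⟨(i : ℕ) + 1, h⟩ ≠ 0) ∧
      ‖A - B‖ < ε := by
  classical
  have hc : ((ε / 2 : ℝ) : ℂ) ≠ 0 := by exact_mod_cast (half_pos hε).ne'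
  refine ⟨A.fillSuperdiag (ε / 2 : ℝ), fun i j hji => ?_, fun i => ?_,
    fun i j => A.fillSuperdiag_apply_of_ne _, A.fillSuperdiag_superdiag_ne_zero _ hc, ?_⟩
  · rw [A.fillSuperdiag_apply_of_ne _ (by omega), hupper i j hji]
  · rw [A.fillSuperdiag_apply_of_ne _ (by omega), hdiag]
  · calc ‖A - A.fillSuperdiag (ε / 2 : ℝ)‖ ≤ ‖((ε / 2 : ℝ) : ℂ)‖ :=
          A.l2_opNorm_sub_fillSuperdiag_le _
      _ < ε := by rw [Complex.norm_real, Real.norm_of_nonneg (by positivity)]; linarith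
end

section
/- Let A = J_{m₁}(α) ⊕ J_{m₂}(α) with m₁ > m₂ ≥ 1 and the same eigenvalue α. If P ∈ M_{m₁+m₂}(ℂ) is an idempotent commuting with A, then there exists an invertible X ∈ M_{m₁+m₂}(ℂ) commuting with A such that X P X⁻¹ is one of: 0, I, I_{m₁} ⊕ 0_{m₂}, or 0_{m₁} ⊕ I_{m₂}. -/
/-
Two idempotents `p`, `q` of a ring with `p - q` nilpotent are conjugate by a unit that commutes
with everything `p` and `q` commute with: `u = q p + (1 - q)(1 - p)` satisfies `u p = q u`, and
`u (p q + (1 - p)(1 - q)) = 1 - (p - q)² = (p q + (1 - p)(1 - q)) u` is a unit.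

A matrix commuting with `J_{m₁}(α) ⊕ J_{m₂}(α)` has upper triangular Toeplitz blocks, and its
`(2,1)` block vanishes on and below its diagonal because `m₂ < m₁`. Ordering the basis by
interleaving the two Jordan chains therefore makes `P` upper triangular with diagonal constant on
each chain. So `f = diag P` equals `l₁ I ⊕ l₂ I` with `l₁, l₂ ∈ {0, 1}`, commutes with `A`, and
`P - f` is strictly triangular, hence nilpotent.
-/

open Matrix

/-- The `m×m` Jordan block with eigenvalue `α`. -/
def jordanBlock (m : ℕ) (α : ℂ) : Matrix (Fin m) (Fin m) ℂ :=
  fun i j => if (i : ℕ) = (j : ℕ) then α else if (i : ℕ) + 1 = (j : ℕ) then 1 else 0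

theorem exists_units_conj_eq_of_isNilpotent_sub {R : Type*} [Ring R] {p q a : R}
    (hp : IsIdempotentElem p) (hq : IsIdempotentElem q) (hpa : Commute p a) (hqa : Commute q a)
    (hpq : IsNilpotent (p - q)) :
    ∃ u : Rˣ, Commute (u : R) a ∧ u * p * ↑u⁻¹ = q := by
  set u := q * p + (1 - q) * (1 - p)
  set v := p * q + (1 - p) * (1 - q)
  have huv : u * v = 1 - (p - q) * (p - q) := by
    simp only [u, v, mul_sub, sub_mul, mul_add, add_mul, mul_one, one_mul, ← mul_assoc, hp.eq,
      hq.eq]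
    simp only [mul_assoc, hp.eq]
    abel
  have hvu : v * u = 1 - (p - q) * (p - q) := by
    simp only [u, v, mul_sub, sub_mul, mul_add, add_mul, mul_one, one_mul, ← mul_assoc, hp.eq,
      hq.eq]
    simp only [mul_assoc, hq.eq]
    abel
  have hup : u * p = q * u := by
    simp only [u, mul_sub, sub_mul, mul_add, add_mul, mul_one, one_mul, ← mul_assoc, hp.eq, hq.eq]
    simp only [mul_assoc, hp.eq]
    abel
  obtain ⟨w, hw⟩ : IsUnit (1 - (p - q) * (p - q)) :=
    ((Commute.refl _).isNilpotent_mul_left hpq).isUnit_one_sub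
  have hu : IsUnit u := isUnit_iff_exists_and_exists.mpr
    ⟨⟨v * ↑w⁻¹, by rw [← mul_assoc, huv, ← hw, w.mul_inv]⟩,
     ⟨↑w⁻¹ * v, by rw [mul_assoc, hvu, ← hw, w.inv_mul]⟩⟩
  refine ⟨hu.unit, ?_, ?_⟩
  · exact (hqa.mul_left hpa).add_left
      (((Commute.one_left a).sub_left hqa).mul_left ((Commute.one_left a).sub_left hpa))
  · rw [IsUnit.unit_spec, hup, mul_assoc, IsUnit.mul_val_inv, mul_one]

namespace Matrix

theorem isNilpotent_of_apply_eq_zero_of_le {ι R : Type*} [Fintype ι] [DecidableEq ι] [Semiring R]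
    {M : Matrix ι ι R} (b : ι → ℕ) (hM : ∀ i j, b j ≤ b i → M i j = 0) : IsNilpotent M := by
  have hpow : ∀ t i j, b j < b i + t → (M ^ t) i j = 0 := by
    intro t
    induction t with
    | zero => intro i j hij; exact one_apply_ne (by rintro rfl; omega)
    | succ t ih =>
      intro i j hij
      rw [pow_succ', mul_apply]
      refine Finset.sum_eq_zero fun k _ => ?_
      rcases le_or_gt (b k) (b i) with hk | hk
      · rw [hM i k hk, zero_mul]
      · rw [ih k j (by omega), mul_zero]
  exact ⟨Finset.univ.sup b + 1, ext fun i j =>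
    hpow _ i j (by have := Finset.le_sup (f := b) (Finset.mem_univ j); omega)⟩

section BlockTriangular

variable {ι R α : Type*} [Fintype ι] [LinearOrder α] {M : Matrix ι ι R} {b : ι → α}

theorem BlockTriangular.mul_apply_self [NonUnitalNonAssocSemiring R] {N : Matrix ι ι R}
    (hM : M.BlockTriangular b) (hN : N.BlockTriangular b) (hb : Function.Injective b) (i : ι) :
    (M * N) i i = M i i * N i i := by
  rw [mul_apply, Finset.sum_eq_single i]
  · intro k _ hki
    rcases lt_trichotomy (b k) (b i) with h | h | h
    · rw [hM h, zero_mul]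
    · exact absurd (hb h) hki
    · rw [hN h, mul_zero]
  · simp

theorem BlockTriangular.isIdempotentElem_apply_self [NonUnitalNonAssocSemiring R]
    (hM : M.BlockTriangular b) (hb : Function.Injective b) (hM' : IsIdempotentElem M) (i : ι) :
    IsIdempotentElem (M i i) := by
  rw [IsIdempotentElem, ← hM.mul_apply_self hM hb, hM'.eq]

end BlockTriangular

theorem BlockTriangular.isNilpotent_sub_diagonal_diag {ι R : Type*} [Fintype ι] [DecidableEq ι]
    [Ring R] {M : Matrix ι ι R} {b : ι → ℕ} (hM : M.BlockTriangular b)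
    (hb : Function.Injective b) : IsNilpotent (M - diagonal M.diag) := by
  refine isNilpotent_of_apply_eq_zero_of_le b fun i j hij => ?_
  rcases hij.lt_or_eq with h | h
  · rw [(hM.sub (blockTriangular_diagonal _)) h]
  · rw [hb h, sub_apply, diagonal_apply_eq, diag_apply, sub_self]

theorem intertwine_toBlocks_of_commute_fromBlocks {l o R : Type*} [Fintype l] [Fintype o]
    [Semiring R] {P : Matrix (l ⊕ o) (l ⊕ o) R} {a : Matrix l l R} {d : Matrix o o R}
    (hP : Commute P (fromBlocks a 0 0 d)) :
    P.toBlocks₁₁ * a = a * P.toBlocks₁₁ ∧ P.toBlocks₁₂ * d = a * P.toBlocks₁₂ ∧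
      P.toBlocks₂₁ * a = d * P.toBlocks₂₁ ∧ P.toBlocks₂₂ * d = d * P.toBlocks₂₂ := by
  have h := hP.eq
  rw [← fromBlocks_toBlocks P, fromBlocks_multiply, fromBlocks_multiply] at h
  simpa using fromBlocks_inj.mp h

end Matrix

theorem jordanBlock_zero_apply {m : ℕ} (i j : Fin m) :
    jordanBlock m 0 i j = if (i : ℕ) + 1 = j then 1 else 0 := by
  unfold jordanBlock
  split_ifs <;> first | rfl | omega

theorem jordanBlock_eq_add_smul_one (m : ℕ) (α : ℂ) :
    jordanBlock m α = jordanBlock m 0 + α • 1 := by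
  ext i j
  by_cases h : (i : ℕ) = j
  · simp [jordanBlock, Fin.ext h]
  · simp [jordanBlock, h, one_apply_ne (fun e => h (congrArg Fin.val e))]

theorem mul_jordanBlock_zero_apply_zero {l : Type*} {n : ℕ} (Y : Matrix l (Fin n) ℂ) (i : l)
    (hn : 0 < n) : (Y * jordanBlock n 0) i ⟨0, hn⟩ = 0 := by
  simp [mul_apply, jordanBlock_zero_apply]

theorem mul_jordanBlock_zero_apply_succ {l : Type*} {n : ℕ} (Y : Matrix l (Fin n) ℂ) (i : l)
    (j : ℕ) (hj : j + 1 < n) : (Y * jordanBlock n 0) i ⟨j + 1, hj⟩ = Y i ⟨j, by omega⟩ := by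
  rw [mul_apply, Fintype.sum_eq_single ⟨j, by omega⟩] <;>
    simp +contextual [jordanBlock_zero_apply, Fin.ext_iff]

theorem jordanBlock_zero_mul_apply_of_succ_lt {l : Type*} {m : ℕ} (Y : Matrix (Fin m) l ℂ)
    (i : ℕ) (hi : i + 1 < m) (j : l) :
    (jordanBlock m 0 * Y) ⟨i, by omega⟩ j = Y ⟨i + 1, hi⟩ j := by
  rw [mul_apply, Fintype.sum_eq_single ⟨i + 1, hi⟩] <;>
    simp +contextual [jordanBlock_zero_apply, Fin.ext_iff, eq_comm]

theorem jordanBlock_zero_mul_apply_of_succ_eq {l : Type*} {m : ℕ} (Y : Matrix (Fin m) l ℂ)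
    (i : ℕ) (hi : i + 1 = m) (j : l) : (jordanBlock m 0 * Y) ⟨i, by omega⟩ j = 0 := by
  simp only [mul_apply, jordanBlock_zero_apply]
  exact Finset.sum_eq_zero fun k _ => by rw [if_neg (by omega), zero_mul]

section Intertwiner

variable {m n : ℕ} {Y : Matrix (Fin m) (Fin n) ℂ}

theorem mul_jordanBlock_zero_eq_of_mul_jordanBlock_eq {α : ℂ}
    (hY : Y * jordanBlock n α = jordanBlock m α * Y) :
    Y * jordanBlock n 0 = jordanBlock m 0 * Y := by
  rw [jordanBlock_eq_add_smul_one n α, jordanBlock_eq_add_smul_one m α, Matrix.mul_add,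
    Matrix.add_mul, Matrix.mul_smul, Matrix.smul_mul, Matrix.mul_one, Matrix.one_mul] at hY
  exact add_right_cancel hY

variable (hY : Y * jordanBlock n 0 = jordanBlock m 0 * Y)
include hY

theorem apply_succ_succ_of_mul_jordanBlock_eq (i j : ℕ) (hi : i + 1 < m) (hj : j + 1 < n) :
    Y ⟨i + 1, hi⟩ ⟨j + 1, hj⟩ = Y ⟨i, by omega⟩ ⟨j, by omega⟩ := by
  rw [← jordanBlock_zero_mul_apply_of_succ_lt Y i hi, ← hY, mul_jordanBlock_zero_apply_succ]

theorem apply_succ_zero_of_mul_jordanBlock_eq (i : ℕ) (hi : i + 1 < m) (hn : 0 < n) :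
    Y ⟨i + 1, hi⟩ ⟨0, hn⟩ = 0 := by
  rw [← jordanBlock_zero_mul_apply_of_succ_lt Y i hi, ← hY, mul_jordanBlock_zero_apply_zero]

theorem apply_last_of_mul_jordanBlock_eq (i j : ℕ) (hi : i + 1 = m) (hj : j + 1 < n) :
    Y ⟨i, by omega⟩ ⟨j, by omega⟩ = 0 := by
  rw [← mul_jordanBlock_zero_apply_succ Y _ j hj, hY,
    jordanBlock_zero_mul_apply_of_succ_eq Y i hi]

theorem apply_eq_zero_of_lt_of_mul_jordanBlock_eq (i j : ℕ) (hi : i < m) (hj : j < n)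
    (hji : j < i) : Y ⟨i, hi⟩ ⟨j, hj⟩ = 0 := by
  obtain ⟨i, rfl⟩ : ∃ i', i = i' + 1 := ⟨i - 1, by omega⟩
  induction j generalizing i with
  | zero => exact apply_succ_zero_of_mul_jordanBlock_eq hY i hi hj
  | succ j ih =>
    rw [apply_succ_succ_of_mul_jordanBlock_eq hY i j hi hj]
    obtain ⟨i, rfl⟩ : ∃ i', i = i' + 1 := ⟨i - 1, by omega⟩
    exact ih _ i _ (by omega)

theorem apply_eq_zero_of_add_lt_add_of_mul_jordanBlock_eq (i j : ℕ) (hi : i < m) (hj : j < n)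
    (hij : j + m < i + n) : Y ⟨i, hi⟩ ⟨j, hj⟩ = 0 := by
  obtain ⟨k, hk⟩ : ∃ k, i + k + 1 = m := ⟨m - i - 1, by omega⟩
  induction k generalizing i j with
  | zero => exact apply_last_of_mul_jordanBlock_eq hY i j (by omega) (by omega)
  | succ k ih =>
    rw [← apply_succ_succ_of_mul_jordanBlock_eq hY i j (by omega) (by omega)]
    exact ih _ _ _ _ (by omega) (by omega)

end Intertwiner

theorem apply_self_eq_of_mul_jordanBlock_eq {m : ℕ} {Y : Matrix (Fin m) (Fin m) ℂ}
    (hY : Y * jordanBlock m 0 = jordanBlock m 0 * Y) (i : ℕ) (hi : i < m) :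
    Y ⟨i, hi⟩ ⟨i, hi⟩ = Y ⟨0, by omega⟩ ⟨0, by omega⟩ := by
  induction i with
  | zero => rfl
  | succ i ih => rw [apply_succ_succ_of_mul_jordanBlock_eq hY i i hi hi, ih]

def jordanWeight (m₁ m₂ : ℕ) : Fin m₁ ⊕ Fin m₂ → ℕ :=
  Sum.elim (fun i => 2 * i) (fun j => 2 * j + 1)

theorem jordanWeight_injective (m₁ m₂ : ℕ) : Function.Injective (jordanWeight m₁ m₂) := by
  rintro (i | i) (j | j) h <;> simp [jordanWeight, Fin.ext_iff] at h ⊢ <;> omega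

section Centralizer

variable {m₁ m₂ : ℕ} {α : ℂ} {P : Matrix (Fin m₁ ⊕ Fin m₂) (Fin m₁ ⊕ Fin m₂) ℂ}

theorem blockTriangular_jordanWeight_of_commute (h : m₂ < m₁)
    (hP : Commute P (fromBlocks (jordanBlock m₁ α) 0 0 (jordanBlock m₂ α))) :
    P.BlockTriangular (jordanWeight m₁ m₂) := by
  obtain ⟨h₁₁, h₁₂, h₂₁, h₂₂⟩ := intertwine_toBlocks_of_commute_fromBlocks hP
  rintro (i | i) (j | j) hji <;> simp only [jordanWeight, Sum.elim_inl, Sum.elim_inr] at hji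
  · exact apply_eq_zero_of_lt_of_mul_jordanBlock_eq
      (mul_jordanBlock_zero_eq_of_mul_jordanBlock_eq h₁₁) i j i.isLt j.isLt (by omega)
  · exact apply_eq_zero_of_lt_of_mul_jordanBlock_eq
      (mul_jordanBlock_zero_eq_of_mul_jordanBlock_eq h₁₂) i j i.isLt j.isLt (by omega)
  · exact apply_eq_zero_of_add_lt_add_of_mul_jordanBlock_eq
      (mul_jordanBlock_zero_eq_of_mul_jordanBlock_eq h₂₁) i j i.isLt j.isLt (by omega)
  · exact apply_eq_zero_of_lt_of_mul_jordanBlock_eq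
      (mul_jordanBlock_zero_eq_of_mul_jordanBlock_eq h₂₂) i j i.isLt j.isLt (by omega)

theorem diagonal_diag_eq_fromBlocks_of_commute (h₁ : 0 < m₁) (h₂ : 0 < m₂)
    (hP : Commute P (fromBlocks (jordanBlock m₁ α) 0 0 (jordanBlock m₂ α))) :
    diagonal P.diag = fromBlocks (P (.inl ⟨0, h₁⟩) (.inl ⟨0, h₁⟩) • 1) 0 0
      (P (.inr ⟨0, h₂⟩) (.inr ⟨0, h₂⟩) • 1) := by
  obtain ⟨h₁₁, -, -, h₂₂⟩ := intertwine_toBlocks_of_commute_fromBlocks hP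
  ext (i | i) (j | j)
  · rcases eq_or_ne i j with rfl | hij
    · simpa [toBlocks₁₁] using apply_self_eq_of_mul_jordanBlock_eq
        (mul_jordanBlock_zero_eq_of_mul_jordanBlock_eq h₁₁) i i.isLt
    · simp [hij]
  · simp
  · simp
  · rcases eq_or_ne i j with rfl | hij
    · simpa [toBlocks₂₂] using apply_self_eq_of_mul_jordanBlock_eq
        (mul_jordanBlock_zero_eq_of_mul_jordanBlock_eq h₂₂) i i.isLt
    · simp [hij]

end Centralizer

theorem stmt_12 (m₁ m₂ : ℕ) (h₂ : 1 ≤ m₂) (h : m₂ < m₁) (α : ℂ)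
    (A P : Matrix (Fin m₁ ⊕ Fin m₂) (Fin m₁ ⊕ Fin m₂) ℂ)
    (hA : A = fromBlocks (jordanBlock m₁ α) 0 0 (jordanBlock m₂ α))
    (hP : P * P = P) (hPA : P * A = A * P) :
    ∃ X : Matrix (Fin m₁ ⊕ Fin m₂) (Fin m₁ ⊕ Fin m₂) ℂ, IsUnit X ∧ X * A = A * X ∧
      (X * P * X⁻¹ = 0 ∨ X * P * X⁻¹ = 1 ∨
       X * P * X⁻¹ = fromBlocks 1 0 0 0 ∨ X * P * X⁻¹ = fromBlocks 0 0 0 1) := by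
  subst hA
  have h₁ : 0 < m₁ := by omega
  have hT := blockTriangular_jordanWeight_of_commute h hPA
  have hdiag := hT.isIdempotentElem_apply_self (jordanWeight_injective m₁ m₂) hP
  have hf_eq := diagonal_diag_eq_fromBlocks_of_commute h₁ h₂ hPA
  have hf : IsIdempotentElem (diagonal P.diag) := by
    rw [IsIdempotentElem, diagonal_mul_diagonal]
    exact congrArg diagonal (funext hdiag)
  have hfA : Commute (diagonal P.diag) (fromBlocks (jordanBlock m₁ α) 0 0 (jordanBlock m₂ α)) := by
    rw [hf_eq]
    simp [Commute, SemiconjBy, fromBlocks_multiply]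
  obtain ⟨u, huA, huP⟩ := exists_units_conj_eq_of_isNilpotent_sub hP hf hPA hfA
    (hT.isNilpotent_sub_diagonal_diag (jordanWeight_injective m₁ m₂))
  refine ⟨u, u.isUnit, huA.eq, ?_⟩
  rw [← coe_units_inv, huP, hf_eq]
  rcases IsIdempotentElem.iff_eq_zero_or_one.mp (hdiag (.inl ⟨0, h₁⟩)) with hl₁ | hl₁ <;>
    rcases IsIdempotentElem.iff_eq_zero_or_one.mp (hdiag (.inr ⟨0, h₂⟩)) with hl₂ | hl₂ <;>
    simp [hl₁, hl₂]
end

section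
/- Let N be a bounded normal operator on a separable Hilbert space H and P an idempotent (P² = P) commuting with every spectral projection of N. If additionally P commutes with every bounded operator commuting with N (i.e., P is in the center of {N}'), and {N}' is abelian (N has multiplicity one), then P is a spectral projection of N; in particular P is self-adjoint. -/
/-!
P commutes with N and, since N is normal, with N⋆; taking adjoints, P⋆ commutes with N too.
As the commutant of N is abelian, P and P⋆ commute, so P is a normal idempotent, hence an
orthogonal projection.
-/

theorem IsStarNormal.of_commute_of_commute_star {R : Type*} [Monoid R] [StarMul R] {n a : R}
    (habelian : ∀ s t : R, Commute s n → Commute t n → Commute s t)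
    (ha : Commute a n) (ha_star : Commute a (star n)) : IsStarNormal a :=
  ⟨(habelian _ _ (star_star n ▸ ha_star.star_star) ha)⟩

theorem stmt_18_general {H : Type*} [NormedAddCommGroup H] [InnerProductSpace ℂ H]
    [CompleteSpace H]
    (N : H →L[ℂ] H) (hN : Commute (ContinuousLinearMap.adjoint N) N)
    (habelian : ∀ S T : H →L[ℂ] H, S * N = N * S → T * N = N * T → S * T = T * S)
    (P : H →L[ℂ] H) (hP : P * P = P)
    (hPcomm : ∀ T : H →L[ℂ] H, T * N = N * T → P * T = T * P) :
    IsSelfAdjoint P ∧ P * N = N * P := by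
  have hPN : Commute P N := hPcomm N rfl
  have hPN_star : Commute P (star N) := hPcomm _ hN
  have hP_normal : IsStarNormal P :=
    IsStarNormal.of_commute_of_commute_star habelian hPN hPN_star
  exact ⟨(ContinuousLinearMap.IsIdempotentElem.isSelfAdjoint_iff_isStarNormal hP).mpr hP_normal,
    hPN⟩

theorem stmt_18 {H : Type*} [NormedAddCommGroup H] [InnerProductSpace ℂ H]
    [CompleteSpace H] [TopologicalSpace.SeparableSpace H]
    (N : H →L[ℂ] H) (hN : Commute (ContinuousLinearMap.adjoint N) N)
    (habelian : ∀ S T : H →L[ℂ] H, S * N = N * S → T * N = N * T → S * T = T * S)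
    (P : H →L[ℂ] H) (hP : P * P = P)
    (hPcomm : ∀ T : H →L[ℂ] H, T * N = N * T → P * T = T * P) :
    IsSelfAdjoint P ∧ P * N = N * P :=
  stmt_18_general N hN habelian P hP hPcomm
end
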